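/- arXiv:1402.2831 — 2 statements merged into one kernel-verified Lean document; each statement's English description precedes it below -/
import Mathlib

section
/- Let ω > 0, b > 0, D > 0 and L > π/√ω. Then there exists a unique x̄ in the interval (π/(2√ω), π/√ω) satisfying √(b/(ωD)) · tan(√ω x̄) = tanh(√(b/D)(x̄ − L)). -/
/-!
Put `u = √ω x` and `c = √(b / (ω D))`; since `√(b / D) = c √ω` the equation becomes
`c tan u = tanh (c (u - a))` on `(π/2, π)` with `a = √ω L > π`. The difference
`φ u = c tan u - tanh (c (u - a))` has derivative `c (tan² u + tanh² (c (u - a))) > 0`, so it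
is strictly increasing; it is negative where `c tan u = -2` and equals `-tanh (c (π - a)) > 0`
at `π`, so it has exactly one zero.
-/

namespace Real

theorem hasDerivAt_tanh (x : ℝ) : HasDerivAt tanh (1 - tanh x ^ 2) x := by
  have hcosh : cosh x ≠ 0 := (cosh_pos x).ne'
  have h := (hasDerivAt_sinh x).div (hasDerivAt_cosh x) hcosh
  rw [show sinh / cosh = tanh from funext fun y => (tanh_eq_sinh_div_cosh y).symm] at h
  refine h.congr_deriv ?_
  rw [tanh_eq_sinh_div_cosh]
  field_simp

theorem tanh_neg_of_neg {x : ℝ} (hx : x < 0) : tanh x < 0 := by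
  rw [tanh_eq_sinh_div_cosh]
  exact div_neg_of_neg_of_pos (sinh_neg_iff.mpr hx) (cosh_pos x)

theorem tan_neg_of_pi_div_two_lt_of_lt {x : ℝ} (hx₁ : π / 2 < x) (hx₂ : x < π) : tan x < 0 := by
  rw [← tan_periodic.sub_eq x]
  exact tan_neg_of_neg_of_pi_div_two_lt (by linarith) (by linarith)

end Real

open Real Set

section TanTanh

variable {c : ℝ} (a : ℝ)

theorem hasDerivAt_mul_tan_sub_tanh {u : ℝ} (hu : cos u ≠ 0) :
    HasDerivAt (fun u => c * tan u - tanh (c * (u - a)))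
      (c * (tan u ^ 2 + tanh (c * (u - a)) ^ 2)) u := by
  have htan := (hasDerivAt_tan hu).const_mul c
  have htanh := (hasDerivAt_tanh (c * (u - a))).comp u
    (((hasDerivAt_id u).sub_const a).const_mul c)
  refine (htan.sub htanh).congr_deriv ?_
  rw [one_div, ← inv_one_add_tan_sq hu, inv_inv]
  ring

theorem cos_ne_zero_of_mem_Ioc {u : ℝ} (hu : u ∈ Ioc (π / 2) π) : cos u ≠ 0 :=
  (cos_neg_of_pi_div_two_lt_of_lt hu.1 (by linarith [hu.2, pi_pos])).ne

theorem continuousOn_mul_tan_sub_tanh :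
    ContinuousOn (fun u => c * tan u - tanh (c * (u - a))) (Ioc (π / 2) π) := fun _ hu =>
  (hasDerivAt_mul_tan_sub_tanh a (cos_ne_zero_of_mem_Ioc hu)).continuousAt.continuousWithinAt

theorem strictMonoOn_mul_tan_sub_tanh (hc : 0 < c) :
    StrictMonoOn (fun u => c * tan u - tanh (c * (u - a))) (Ioc (π / 2) π) := by
  refine strictMonoOn_of_deriv_pos (convex_Ioc _ _) (continuousOn_mul_tan_sub_tanh a) ?_
  intro u hu
  rw [interior_Ioc] at hu
  rw [(hasDerivAt_mul_tan_sub_tanh a (cos_ne_zero_of_mem_Ioc (Ioo_subset_Ioc_self hu))).deriv]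
  have htan : tan u < 0 := tan_neg_of_pi_div_two_lt_of_lt hu.1 hu.2
  exact mul_pos hc (add_pos_of_pos_of_nonneg (sq_pos_of_neg htan) (sq_nonneg _))

theorem exists_mul_tan_eq_tanh (hc : 0 < c) (ha : π < a) :
    ∃ u ∈ Ioo (π / 2) π, c * tan u = tanh (c * (u - a)) := by
  -- at `π - arctan (2 / c)` the left side is `-2`, below the range of `tanh`
  set u₀ := π - arctan (2 / c)
  have hu₀ : u₀ ∈ Ioc (π / 2) π :=
    ⟨by linarith [arctan_lt_pi_div_two (2 / c)],
      by linarith [arctan_pos.mpr (by positivity : 0 < 2 / c)]⟩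
  have hneg : c * tan u₀ - tanh (c * (u₀ - a)) < 0 := by
    have : c * tan u₀ = -2 := by
      rw [tan_pi_sub, tan_arctan]
      field_simp
    linarith [neg_one_lt_tanh (c * (u₀ - a))]
  have hpos : 0 < c * tan π - tanh (c * (π - a)) := by
    rw [tan_pi, mul_zero, zero_sub, neg_pos]
    exact tanh_neg_of_neg (mul_neg_of_pos_of_neg hc (by linarith))
  obtain ⟨u, hu, hzero⟩ := intermediate_value_Ioo hu₀.2
    ((continuousOn_mul_tan_sub_tanh a).mono (Icc_subset_Ioc_iff hu₀.2 |>.mpr ⟨hu₀.1, le_rfl⟩))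
    ⟨hneg, hpos⟩
  exact ⟨u, ⟨hu₀.1.trans hu.1, hu.2⟩, sub_eq_zero.mp hzero⟩

theorem existsUnique_mul_tan_eq_tanh (hc : 0 < c) (ha : π < a) :
    ∃! u, u ∈ Ioo (π / 2) π ∧ c * tan u = tanh (c * (u - a)) := by
  obtain ⟨u, hu, hsol⟩ := exists_mul_tan_eq_tanh a hc ha
  refine ⟨u, ⟨hu, hsol⟩, fun v ⟨hv, hvsol⟩ => ?_⟩
  exact (strictMonoOn_mul_tan_sub_tanh a hc).injOn (Ioo_subset_Ioc_self hv)
    (Ioo_subset_Ioc_self hu) (by simp only [hsol, hvsol, sub_self])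

end TanTanh

theorem stmt_2 (ω b D L : ℝ) (hω : 0 < ω) (hb : 0 < b) (hD : 0 < D)
    (hL : π / Real.sqrt ω < L) :
    ∃! x : ℝ, x ∈ Set.Ioo (π / (2 * Real.sqrt ω)) (π / Real.sqrt ω) ∧
      Real.sqrt (b / (ω * D)) * Real.tan (Real.sqrt ω * x) =
        Real.tanh (Real.sqrt (b / D) * (x - L)) := by
  have hs : 0 < √ω := sqrt_pos.mpr hω
  have hc : 0 < √(b / (ω * D)) := sqrt_pos.mpr (by positivity)
  have hk : √(b / D) = √(b / (ω * D)) * √ω := by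
    rw [← sqrt_mul (by positivity)]
    congr 1
    field_simp
  have hmem (x : ℝ) : √ω * x ∈ Ioo (π / 2) π ↔ x ∈ Ioo (π / (2 * √ω)) (π / √ω) := by
    rw [mem_Ioo, mem_Ioo, div_lt_iff₀ (by positivity), lt_div_iff₀' hs,
      div_lt_iff₀' (by positivity), mul_right_comm, mul_comm 2]
  have key := existsUnique_mul_tan_eq_tanh (√ω * L) hc ((div_lt_iff₀' hs).mp hL)
  rw [(mulLeft_bijective₀ _ hs.ne').existsUnique_iff] at key
  refine (existsUnique_congr fun x => ?_).mp key
  rw [hmem, hk, mul_assoc, mul_sub (√ω) x L]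
end

section
/- Let ω > 0, and on [0, x̄] with x̄ ∈ (π/(2√ω), π/√ω), define φ(x) = (2κbK/(ωχD)) cos(√ω x)/cos(√ω x̄) − aK/(ωD) and ρ(x) = (χ/(2κ))φ(x) + K where ω = (aχ/(2κ) − b)/D and K > 0. Then on (0, x̄), ρ and φ satisfy the stationary system P(ρ)_x = χρφ_x (with P(ρ) = κρ²) and Dφ_xx + aρ − bφ = 0. -/
/-!
Since `ρ = χ/(2κ) φ + K`, the chain rule gives `(κ ρ²)' = 2κ ρ ρ' = χ ρ φ'`, so the first
equation holds for every differentiable `φ`. Writing `φ = A cos (√ω x) - aK/(ωD)`, one has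
`D φ'' = -D ω (φ + aK/(ωD))`, while `a ρ - b φ = (aχ/(2κ) - b) φ + aK = D ω φ + aK` by the
definition of `ω`; the two cancel.
-/

open Real

lemma hasDerivAt_const_mul_cos_mul_add (A s B x : ℝ) :
    HasDerivAt (fun y => A * cos (s * y) + B) (-(A * s) * sin (s * x)) x :=
  ((((hasDerivAt_id x).const_mul s).cos.const_mul A).add_const B).congr_deriv
    (by simp only [id_eq, mul_one]; ring)

lemma deriv_deriv_const_mul_cos_mul_add (A s B x : ℝ) :
    deriv (deriv fun y => A * cos (s * y) + B) x = -s ^ 2 * A * cos (s * x) := by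
  have hderiv : deriv (fun y => A * cos (s * y) + B) = fun y => -(A * s) * sin (s * y) :=
    funext fun y => (hasDerivAt_const_mul_cos_mul_add A s B y).deriv
  rw [hderiv]
  exact ((((hasDerivAt_id x).const_mul s).sin.const_mul (-(A * s))).congr_deriv
    (by simp only [id_eq, mul_one]; ring)).deriv

lemma hasDerivAt_pressure_of_affine {κ χ K φ' x : ℝ} {φ : ℝ → ℝ} (hκ : κ ≠ 0)
    (hφ : HasDerivAt φ φ' x) :
    HasDerivAt (fun y => κ * (χ / (2 * κ) * φ y + K) ^ 2)
      (χ * (χ / (2 * κ) * φ x + K) * φ') x :=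
  ((((hφ.const_mul (χ / (2 * κ))).add_const K).fun_pow 2).const_mul κ).congr_deriv
    (by simp only [Nat.cast_ofNat, Nat.add_one_sub_one, pow_one]; field_simp)

theorem stmt_3_general (κ χ D a b K ω xb : ℝ)
    (hκ : 0 < κ) (hD : 0 < D)
    (hω : ω = (a * χ / (2 * κ) - b) / D) (hωpos : 0 < ω)
    (φ ρ : ℝ → ℝ)
    (hφ : ∀ x : ℝ, φ x = (2 * κ * b * K / (ω * χ * D)) *
        Real.cos (Real.sqrt ω * x) / Real.cos (Real.sqrt ω * xb) - a * K / (ω * D))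
    (hρ : ∀ x : ℝ, ρ x = χ / (2 * κ) * φ x + K) :
    ∀ x ∈ Set.Ioo (0 : ℝ) xb,
      deriv (fun y => κ * (ρ y) ^ 2) x = χ * ρ x * deriv φ x ∧
      D * deriv (deriv φ) x + a * ρ x - b * φ x = 0 := by
  obtain ⟨A, hφA⟩ : ∃ A, φ = fun y => A * cos (√ω * y) + -(a * K / (ω * D)) :=
    ⟨2 * κ * b * K / (ω * χ * D) / cos (√ω * xb), funext fun y => (hφ y).trans (by ring)⟩
  have hρφ : ρ = fun y => χ / (2 * κ) * φ y + K := funext hρ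
  have hDω : D * ω = a * χ / (2 * κ) - b := by
    rw [hω]
    field_simp
  intro x _
  have hφ' := hasDerivAt_const_mul_cos_mul_add A √ω (-(a * K / (ω * D))) x
  subst hρφ hφA
  refine ⟨?_, ?_⟩
  · rw [(hasDerivAt_pressure_of_affine hκ.ne' hφ').deriv, hφ'.deriv]
  · rw [deriv_deriv_const_mul_cos_mul_add, sq_sqrt hωpos.le]
    have hB : D * ω * (a * K / (ω * D)) = a * K := by
      field_simp
    linear_combination (a * K / (ω * D) - A * cos (√ω * x)) * hDω - hB

theorem stmt_3 (κ χ D a b K ω xb : ℝ)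
    (hκ : 0 < κ) (hχ : 0 < χ) (hD : 0 < D) (ha : 0 < a) (hb : 0 < b)
    (hK : 0 < K)
    (hω : ω = (a * χ / (2 * κ) - b) / D) (hωpos : 0 < ω)
    (hxb : xb ∈ Set.Ioo (π / (2 * Real.sqrt ω)) (π / Real.sqrt ω))
    (φ ρ : ℝ → ℝ)
    (hφ : ∀ x : ℝ, φ x = (2 * κ * b * K / (ω * χ * D)) *
        Real.cos (Real.sqrt ω * x) / Real.cos (Real.sqrt ω * xb) - a * K / (ω * D))
    (hρ : ∀ x : ℝ, ρ x = χ / (2 * κ) * φ x + K) :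
    ∀ x ∈ Set.Ioo (0 : ℝ) xb,
      deriv (fun y => κ * (ρ y) ^ 2) x = χ * ρ x * deriv φ x ∧
      D * deriv (deriv φ) x + a * ρ x - b * φ x = 0 :=
  stmt_3_general κ χ D a b K ω xb hκ hD hω hωpos φ ρ hφ hρ
end
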